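/- Let r₁ and r₂ be positive integers, and let Γ₀ ⊆ Γ̂₀ be a normal subgroup, where Γ₀ ≅ H(r₁) and Γ̂₀ ≅ H(r₂). Then the quotient group G₀ = Γ̂₀/Γ₀ is finite, and G₀ contains a normal abelian subgroup of index at most r₁. -/

import Mathlib

/-!
Write ψ : H(r₁) → H(r₂) for the embedding with image Γ₀ and D for the determinant of the
images of ψ δ₁, ψ δ₂ in ℤ². From (ψ δ₃) ^ r₁ = [ψ δ₁, ψ δ₂] = δ₃ ^ (r₂ D), the element
ψ δ₃ = δ₃ ^ m is central, r₁ m = r₂ D, and m, D ≠ 0. A central element of Γ₀ comes from a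
central element of H(r₁), so Γ₀ meets the centre exactly in ⟨δ₃ ^ m⟩; with D ≠ 0 this makes
Γ₀ of finite index.

Normality puts the commutators of γ ∈ Γ₀ with δ₁, δ₂ into ⟨δ₃ ^ m⟩, i.e. m ∣ r₂ γ.a and
m ∣ r₂ γ.b, equivalently t ∣ γ.a and t ∣ γ.b for t = m / gcd(m, r₂). Hence t² ∣ D, which
forces t ∣ r₁. The subgroup {x | t ∣ x.b} contains Γ₀, has index |t|, and its commutators lie
in ⟨δ₃ ^ m⟩, so its image in the quotient is abelian.
-/

/-- The "discrete Heisenberg group" H(r): the group with presentation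
⟨δ₁, δ₂, δ₃ ∣ [δ₁,δ₃] = [δ₂,δ₃] = 1, [δ₁,δ₂] = δ₃^r⟩, realized concretely as the
group of upper unitriangular 3×3 rational matrices with (1,2)-entry `a ∈ ℤ`,
(2,3)-entry `b ∈ ℤ` and (1,3)-entry `c/r` with `c ∈ ℤ`; the element ⟨a, b, c⟩
corresponds to δ₁^a δ₂^b (δ₃-part c), with δ₁ = ⟨1,0,0⟩, δ₂ = ⟨0,1,0⟩,
δ₃ = ⟨0,0,1⟩. -/
@[ext]
structure Heis (r : ℕ) : Type where
  a : ℤ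
  b : ℤ
  c : ℤ

namespace Heis

variable {r : ℕ}

instance : Mul (Heis r) :=
  ⟨fun x y => ⟨x.a + y.a, x.b + y.b, x.c + y.c + r * x.a * y.b⟩⟩

instance : One (Heis r) := ⟨⟨0, 0, 0⟩⟩

instance : Inv (Heis r) :=
  ⟨fun x => ⟨-x.a, -x.b, -x.c + r * x.a * x.b⟩⟩

@[simp] lemma mul_a (x y : Heis r) : (x * y).a = x.a + y.a := rfl
@[simp] lemma mul_b (x y : Heis r) : (x * y).b = x.b + y.b := rfl
@[simp] lemma mul_c (x y : Heis r) : (x * y).c = x.c + y.c + r * x.a * y.b := rfl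
@[simp] lemma one_a : (1 : Heis r).a = 0 := rfl
@[simp] lemma one_b : (1 : Heis r).b = 0 := rfl
@[simp] lemma one_c : (1 : Heis r).c = 0 := rfl
@[simp] lemma inv_a (x : Heis r) : x⁻¹.a = -x.a := rfl
@[simp] lemma inv_b (x : Heis r) : x⁻¹.b = -x.b := rfl
@[simp] lemma inv_c (x : Heis r) : x⁻¹.c = -x.c + r * x.a * x.b := rfl

instance instGroup : Group (Heis r) where
  mul_assoc x y z := by ext <;> simp <;> ring
  one_mul x := by ext <;> simp
  mul_one x := by ext <;> simp
  inv_mul_cancel x := by ext <;> simp <;> ring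

/-- The generator δ₁ of H(r). -/
def δ₁ : Heis r := ⟨1, 0, 0⟩

/-- The generator δ₂ of H(r). -/
def δ₂ : Heis r := ⟨0, 1, 0⟩

/-- The generator δ₃ of H(r); it generates the center of H(r) (for r > 0). -/
def δ₃ : Heis r := ⟨0, 0, 1⟩

end Heis

lemma Int.exists_dvd_mul_iff_dvd {m : ℤ} (hm : m ≠ 0) (r : ℤ) :
    ∃ t : ℤ, t ≠ 0 ∧ ∀ x, m ∣ r * x ↔ t ∣ x := by
  obtain ⟨g, m', r', hg, hcop, rfl, rfl⟩ := Int.exists_gcd_one' (Int.gcd_pos_of_ne_zero_left r hm)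
  have hg' : (g : ℤ) ≠ 0 := by exact_mod_cast hg.ne'
  refine ⟨m', left_ne_zero_of_mul hm, fun x => ?_⟩
  rw [show r' * g * x = r' * x * g by ring, mul_dvd_mul_iff_right hg']
  exact ⟨(Int.isCoprime_iff_gcd_eq_one.mpr hcop).dvd_of_dvd_mul_left, (Dvd.dvd.mul_left · r')⟩

open scoped commutatorElement

namespace Heis

variable {r : ℕ}

lemma zpow_a (g : Heis r) (n : ℤ) : (g ^ n).a = n * g.a := by
  induction n using Int.induction_on with
  | zero => simp
  | succ n ih => rw [zpow_add_one, mul_a, ih]; ring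
  | pred n ih => rw [zpow_sub_one, mul_a, inv_a, ih]; ring

lemma zpow_b (g : Heis r) (n : ℤ) : (g ^ n).b = n * g.b := by
  induction n using Int.induction_on with
  | zero => simp
  | succ n ih => rw [zpow_add_one, mul_b, ih]; ring
  | pred n ih => rw [zpow_sub_one, mul_b, inv_b, ih]; ring

@[simp] lemma δ₃_zpow (c : ℤ) : (δ₃ ^ c : Heis r) = ⟨0, 0, c⟩ := by
  induction c using Int.induction_on with
  | zero => rfl
  | succ c ih => rw [zpow_add_one, ih]; ext <;> simp [δ₃]
  | pred c ih => rw [zpow_sub_one, ih]; ext <;> simp [δ₃]; ring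

lemma commute_δ₃_zpow (c : ℤ) (x : Heis r) : Commute (δ₃ ^ c) x := by
  ext <;> simp; ring

lemma commutatorElement_eq_δ₃_zpow (x y : Heis r) :
    ⁅x, y⁆ = δ₃ ^ (r * (x.a * y.b - x.b * y.a)) := by
  rw [commutatorElement_def]
  ext <;> simp; ring

lemma commutatorElement_δ₁_δ₂ : ⁅(δ₁ : Heis r), (δ₂ : Heis r)⁆ = δ₃ ^ (r : ℤ) := by
  simp [commutatorElement_eq_δ₃_zpow, δ₁, δ₂]

lemma eq_δ₃_zpow_of_commute (hr : r ≠ 0) {x : Heis r} (h₁ : Commute x δ₁)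
    (h₂ : Commute x δ₂) : x = δ₃ ^ x.c := by
  have hb := congrArg Heis.c h₁.eq
  have ha := congrArg Heis.c h₂.eq
  simp [δ₁, δ₂, hr] at ha hb
  ext <;> simp [ha, hb]

lemma eq_δ₃_zpow_of_zpow_eq {n c : ℤ} (hn : n ≠ 0) {g : Heis r} (h : g ^ n = δ₃ ^ c) :
    g = δ₃ ^ g.c := by
  have ha := congrArg Heis.a h
  have hb := congrArg Heis.b h
  simp [zpow_a, zpow_b, hn] at ha hb
  ext <;> simp [ha, hb]

def bHom : Heis r →* Multiplicative ℤ where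
  toFun x := .ofAdd x.b
  map_one' := rfl
  map_mul' _ _ := rfl

def bZMultiples (t : ℤ) : Subgroup (Heis r) :=
  (AddSubgroup.zmultiples t).toSubgroup.comap bHom

lemma mem_bZMultiples {t : ℤ} {x : Heis r} : x ∈ bZMultiples t ↔ t ∣ x.b :=
  Int.mem_zmultiples_iff

instance (t : ℤ) : (bZMultiples t : Subgroup (Heis r)).Normal :=
  Subgroup.Normal.comap inferInstance _

lemma index_bZMultiples (t : ℤ) : (bZMultiples t : Subgroup (Heis r)).index = t.natAbs := by
  rw [bZMultiples, Subgroup.index_comap_of_surjective _ fun y => ⟨⟨0, y.toAdd, 0⟩, rfl⟩,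
    AddSubgroup.index_toSubgroup, Int.index_zmultiples]

section Quotient

variable {N : Subgroup (Heis r)} {m : ℤ} {u v : Heis r}

lemma exists_mem_a_eq_b_eq (hu : u ∈ N) (hv : v ∈ N) (α β : ℤ) :
    ∃ n ∈ N, n.a = (u.a * v.b - u.b * v.a) * α ∧ n.b = (u.a * v.b - u.b * v.a) * β :=
  ⟨u ^ (α * v.b - β * v.a) * v ^ (β * u.a - α * u.b),
    mul_mem (zpow_mem hu _) (zpow_mem hv _), by simp [zpow_a]; ring, by simp [zpow_b]; ring⟩

lemma finite_quotient (hm : m ≠ 0) (hmN : δ₃ ^ m ∈ N) (hu : u ∈ N) (hv : v ∈ N)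
    (hD : u.a * v.b - u.b * v.a ≠ 0) : Finite (Heis r ⧸ N) := by
  set D := u.a * v.b - u.b * v.a
  have hrep : ∀ x : Heis r, ∃ c : ℤ, (x : Heis r ⧸ N) = (⟨x.a % D, x.b % D, c % m⟩ : Heis r) := by
    intro x
    obtain ⟨n, hn, hna, hnb⟩ := exists_mem_a_eq_b_eq hu hv (x.a / D) (x.b / D)
    set y := x * n⁻¹
    have hy : (⟨x.a % D, x.b % D, y.c % m⟩ : Heis r) * (δ₃ ^ m) ^ (y.c / m) = y := by
      rw [← zpow_mul]
      ext <;> simp [y, hna, hnb, Int.emod_def] <;> ring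
    refine ⟨y.c, ?_⟩
    calc (x : Heis r ⧸ N) = ↑(y * n) := by rw [inv_mul_cancel_right]
      _ = ↑y := QuotientGroup.mk_mul_of_mem _ hn
      _ = (((⟨x.a % D, x.b % D, y.c % m⟩ : Heis r) * (δ₃ ^ m) ^ (y.c / m) : Heis r) :
          Heis r ⧸ N) := by rw [hy]
      _ = _ := QuotientGroup.mk_mul_of_mem _ (zpow_mem hmN _)
  have hbox := (Set.finite_Ico (0 : ℤ) D.natAbs).prod
    ((Set.finite_Ico (0 : ℤ) D.natAbs).prod (Set.finite_Ico (0 : ℤ) m.natAbs))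
  refine Set.finite_univ_iff.mp <|
    (hbox.image fun p => ((⟨p.1, p.2.1, p.2.2⟩ : Heis r) : Heis r ⧸ N)).subset ?_
  rintro q -
  induction q using QuotientGroup.induction_on with
  | H x =>
    obtain ⟨c, hc⟩ := hrep x
    exact ⟨(x.a % D, x.b % D, c % m),
      ⟨⟨Int.emod_nonneg _ hD, Int.emod_lt _ hD⟩, ⟨Int.emod_nonneg _ hD, Int.emod_lt _ hD⟩,
        ⟨Int.emod_nonneg _ hm, Int.emod_lt _ hm⟩⟩, hc.symm⟩

lemma dvd_mul_a_and_dvd_mul_b_of_mem [N.Normal] (hZ : ∀ c, δ₃ ^ c ∈ N → m ∣ c) {γ : Heis r}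
    (hγ : γ ∈ N) : m ∣ r * γ.a ∧ m ∣ r * γ.b := by
  have key (g : Heis r) : m ∣ r * (g.a * γ.b - g.b * γ.a) := by
    refine hZ _ (commutatorElement_eq_δ₃_zpow g γ ▸ ?_)
    exact mul_mem (Subgroup.Normal.conj_mem inferInstance γ hγ g) (inv_mem hγ)
  constructor
  · simpa [δ₂] using key δ₂
  · simpa [δ₁] using key δ₁

lemma commute_mk_of_dvd [N.Normal] (hZ : ∀ c, m ∣ c → δ₃ ^ c ∈ N) {t : ℤ} (ht : m ∣ r * t)
    {x y : Heis r} (hx : t ∣ x.b) (hy : t ∣ y.b) : Commute (x : Heis r ⧸ N) (y : Heis r ⧸ N) := by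
  obtain ⟨k, hk⟩ := hx
  obtain ⟨l, hl⟩ := hy
  have hxy : ⁅x, y⁆ ∈ N := by
    rw [commutatorElement_eq_δ₃_zpow]
    exact hZ _ (ht.trans ⟨x.a * l - k * y.a, by rw [hk, hl]; ring⟩)
  rw [← commutatorElement_eq_one_iff_commute, ← QuotientGroup.mk'_apply, ← QuotientGroup.mk'_apply,
    ← map_commutatorElement, QuotientGroup.mk'_apply, QuotientGroup.eq_one_iff]
  exact hxy

theorem exists_normal_commute_index_le [N.Normal] {s : ℕ} (hs : 0 < s) (hm : m ≠ 0)
    (hZ : ∀ c, δ₃ ^ c ∈ N ↔ m ∣ c) (hu : u ∈ N) (hv : v ∈ N)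
    (hD : s * m = r * (u.a * v.b - u.b * v.a)) :
    ∃ A : Subgroup (Heis r ⧸ N), A.Normal ∧ (∀ x y : A, x * y = y * x) ∧ A.index ≤ s := by
  obtain ⟨t, -, ht⟩ := Int.exists_dvd_mul_iff_dvd hm r
  have hNt (γ : Heis r) (hγ : γ ∈ N) : t ∣ γ.a ∧ t ∣ γ.b :=
    (dvd_mul_a_and_dvd_mul_b_of_mem (hZ · |>.mp) hγ).imp (ht _).mp (ht _).mp
  have hts : t ∣ s := by
    obtain ⟨hua, hub⟩ := hNt u hu
    obtain ⟨hva, hvb⟩ := hNt v hv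
    have htD : t * t ∣ u.a * v.b - u.b * v.a := dvd_sub (mul_dvd_mul hua hvb) (mul_dvd_mul hub hva)
    refine (mul_dvd_mul_iff_left hm).mp ?_
    calc m * t ∣ r * t * t := mul_dvd_mul_right ((ht t).mpr dvd_rfl) t
      _ = r * (t * t) := mul_assoc _ _ _
      _ ∣ r * (u.a * v.b - u.b * v.a) := mul_dvd_mul_left _ htD
      _ = m * s := by rw [← hD, mul_comm]
  refine ⟨(bZMultiples t).map (QuotientGroup.mk' N),
    Subgroup.Normal.map inferInstance _ (QuotientGroup.mk'_surjective N), ?_, ?_⟩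
  · rintro ⟨_, x, hx, rfl⟩ ⟨_, y, hy, rfl⟩
    exact Subtype.ext <| commute_mk_of_dvd (hZ · |>.mpr) ((ht t).mpr dvd_rfl)
      (mem_bZMultiples.mp hx) (mem_bZMultiples.mp hy)
  · rw [Subgroup.index_map_eq _ (QuotientGroup.mk'_surjective N)
      (by rw [QuotientGroup.ker_mk']; exact fun γ hγ => mem_bZMultiples.mpr (hNt γ hγ).2),
      index_bZMultiples]
    exact Nat.le_of_dvd hs (Int.natAbs_dvd_natAbs.mpr hts)

end Quotient

section Embedding

variable {s : ℕ} (ψ : Heis s →* Heis r)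

lemma zpow_map_δ₃ :
    ψ δ₃ ^ (s : ℤ) = δ₃ ^ (r * ((ψ δ₁).a * (ψ δ₂).b - (ψ δ₁).b * (ψ δ₂).a)) := by
  rw [← map_zpow, ← commutatorElement_δ₁_δ₂, map_commutatorElement, commutatorElement_eq_δ₃_zpow]

variable {ψ}

lemma map_δ₃ (hs : s ≠ 0) : ψ δ₃ = δ₃ ^ (ψ δ₃).c :=
  eq_δ₃_zpow_of_zpow_eq (by exact_mod_cast hs) (zpow_map_δ₃ ψ)

lemma mul_c_map_δ₃ (hs : s ≠ 0) :
    s * (ψ δ₃).c = r * ((ψ δ₁).a * (ψ δ₂).b - (ψ δ₁).b * (ψ δ₂).a) := by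
  have h := zpow_map_δ₃ ψ
  rw [map_δ₃ hs, ← zpow_mul] at h
  simpa [mul_comm] using h

lemma c_map_δ₃_ne_zero (hψ : Function.Injective ψ) (hs : s ≠ 0) : (ψ δ₃).c ≠ 0 := by
  intro h
  have : (δ₃ : Heis s) = 1 := hψ (by rw [map_δ₃ hs, h, zpow_zero, map_one])
  simpa [δ₃] using congrArg Heis.c this

lemma δ₃_zpow_mem_range_iff (hψ : Function.Injective ψ) (hs : s ≠ 0) (c : ℤ) :
    δ₃ ^ c ∈ ψ.range ↔ (ψ δ₃).c ∣ c := by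
  constructor
  · rintro ⟨x, hx⟩
    have hcomm (y : Heis s) : Commute x y :=
      hψ (by rw [map_mul, map_mul, hx]; exact commute_δ₃_zpow c (ψ y))
    have hx' : (δ₃ ^ c : Heis r) = δ₃ ^ ((ψ δ₃).c * x.c) := by
      rw [zpow_mul, ← map_δ₃ hs, ← map_zpow, ← eq_δ₃_zpow_of_commute hs (hcomm _) (hcomm _), hx]
    exact ⟨x.c, by simpa using hx'⟩
  · rintro ⟨k, rfl⟩
    exact ⟨δ₃ ^ k, by rw [zpow_mul, ← map_δ₃ hs, map_zpow]⟩

end Embedding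

end Heis

theorem stmt_14_general (r₁ r₂ : ℕ) (hr₁ : 0 < r₁)
    (Γ₀ : Subgroup (Heis r₂)) [Γ₀.Normal] (hiso : Nonempty (Γ₀ ≃* Heis r₁)) :
    Finite (Heis r₂ ⧸ Γ₀) ∧
      ∃ A : Subgroup (Heis r₂ ⧸ Γ₀), A.Normal ∧ (∀ x y : A, x * y = y * x) ∧
        A.index ≤ r₁ := by
  obtain ⟨e⟩ := hiso
  set ψ : Heis r₁ →* Heis r₂ := Γ₀.subtype.comp e.symm.toMonoidHom
  have hψ : Function.Injective ψ := Γ₀.subtype_injective.comp e.symm.injective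
  have hrange : ψ.range = Γ₀ := by
    ext γ
    exact ⟨fun ⟨x, hx⟩ => hx ▸ (e.symm x).2, fun hγ => ⟨e ⟨γ, hγ⟩, by simp [ψ]⟩⟩
  have hm := Heis.c_map_δ₃_ne_zero hψ hr₁.ne'
  have hZ := Heis.δ₃_zpow_mem_range_iff hψ hr₁.ne'
  have hD := Heis.mul_c_map_δ₃ (ψ := ψ) hr₁.ne'
  have hD0 : (ψ Heis.δ₁).a * (ψ Heis.δ₂).b - (ψ Heis.δ₁).b * (ψ Heis.δ₂).a ≠ 0 :=
    right_ne_zero_of_mul (hD ▸ mul_ne_zero (by exact_mod_cast hr₁.ne') hm)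
  rw [hrange] at hZ
  exact ⟨Heis.finite_quotient hm ((hZ _).mpr dvd_rfl) (e.symm Heis.δ₁).2 (e.symm Heis.δ₂).2 hD0,
    Heis.exists_normal_commute_index_le hr₁ hm hZ (e.symm Heis.δ₁).2 (e.symm Heis.δ₂).2 hD⟩

/-- Corollary A.8: let Γ₀ ⊆ Γ̂₀ be a normal subgroup with Γ₀ ≅ H(r₁) and
Γ̂₀ ≅ H(r₂). Then the quotient G₀ = Γ̂₀/Γ₀ is finite and contains a normal abelian
subgroup of index at most r₁. -/
theorem stmt_14 (r₁ r₂ : ℕ) (hr₁ : 0 < r₁) (hr₂ : 0 < r₂)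
    (Γ₀ : Subgroup (Heis r₂)) [Γ₀.Normal] (hiso : Nonempty (Γ₀ ≃* Heis r₁)) :
    Finite (Heis r₂ ⧸ Γ₀) ∧
      ∃ A : Subgroup (Heis r₂ ⧸ Γ₀), A.Normal ∧ (∀ x y : A, x * y = y * x) ∧
        A.index ≤ r₁ :=
  stmt_14_general r₁ r₂ hr₁ Γ₀ hiso
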